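/- Let L₁ and L₂ be regular languages over Σ. If the hairpin completion H_κ(L₁,L₂) is regular, then the growth indicator of the language MGP(L₁,L₂) of minimal gamma-alpha-prefixes is at most 1 (i.e., MGP(L₁,L₂) has polynomial or finite growth). -/

import Mathlib

/-- The antimorphic extension of an involution on letters to words. -/
def ovr {σ : Type} (bar : σ → σ) (w : List σ) : List σ := (w.map bar).reverse

/-- The hairpin completion `H_κ(L₁, L₂)`. -/
def hairpinCompletion {σ : Type} (bar : σ → σ) (κ : ℕ) (L1 L2 : Language σ) :
    Language σ :=
  { π | ∃ γ α β : List σ,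
      π = γ ++ α ++ β ++ ovr bar α ++ ovr bar γ ∧
      κ ≤ α.length ∧
      (γ ++ α ++ β ++ ovr bar α ∈ L1 ∨ α ++ β ++ ovr bar α ++ ovr bar γ ∈ L2) }

/-- The canonical factorization `(γ, α, β)` of a word `π` of the hairpin completion. -/
def CanonFact {σ : Type} (bar : σ → σ) (κ : ℕ) (L1 L2 : Language σ)
    (π γ α β : List σ) : Prop :=
  π = γ ++ α ++ β ++ ovr bar α ++ ovr bar γ ∧
  α.length = κ ∧
  (γ ++ α ++ β ++ ovr bar α ∈ L1 ∨ α ++ β ++ ovr bar α ++ ovr bar γ ∈ L2) ∧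
  (∀ u : List σ, u <+: π → u ∈ L1 → u <+: γ ++ α ++ β ++ ovr bar α) ∧
  (∀ u : List σ, u <:+ π → u ∈ L2 → u <:+ α ++ β ++ ovr bar α ++ ovr bar γ)

/-- The language of minimal gamma-alpha-prefixes of words of the hairpin completion. -/
def MGP {σ : Type} (bar : σ → σ) (κ : ℕ) (L1 L2 : Language σ) : Language σ :=
  { p | ∃ π γ α β : List σ, π ∈ hairpinCompletion bar κ L1 L2 ∧
      CanonFact bar κ L1 L2 π γ α β ∧ p = γ ++ α }

/-- The language of middle factors of canonical factorizations of words
of the hairpin completion. -/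
def Mid {σ : Type} (bar : σ → σ) (κ : ℕ) (L1 L2 : Language σ) : Language σ :=
  { β | ∃ π γ α : List σ, π ∈ hairpinCompletion bar κ L1 L2 ∧
      CanonFact bar κ L1 L2 π γ α β }

/-- The growth indicator of a language: the infimum of all `λ ≥ 0` such that
`|L ∩ Σ^m| ≤ c·λ^m` for some constant `c > 0` and all `m`. -/
noncomputable def growthInd {σ : Type} (L : Language σ) : ℝ :=
  sInf { l : ℝ | 0 ≤ l ∧ ∃ c : ℝ, 0 < c ∧
    ∀ m : ℕ, (Set.ncard { w : List σ | w ∈ L ∧ w.length = m } : ℝ) ≤ c * l ^ m }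

/-!
Profile each minimal prefix `p = γα`, with canonical middle `β`, by the left quotients of the
hairpin completion `H` and of `L1` by `p`, and by the right quotient of `L2` by `β · ovr p`; a
regular language has finitely many of each (Myhill–Nerode, applied to the reversal for right
quotients). Two prefixes `p, p'` of equal length with equal profiles coincide: the crossover
`p' β ovr p` lies in `H`, and the minimality of the two canonical factorizations keeps every
`L1`-prefix and every `L2`-suffix of it from reaching more than `κ` letters into `ovr p` or `p'`,
so the `γα`-part of any of its hairpin factorizations covers `p'`, forcing `p' = p`. Hence `MGP`
has boundedly many words of each length.
-/

theorem List.IsPrefix.exists_eq_append_of_length_le {α : Type*} {u x y : List α}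
    (h : u <+: x ++ y) (hl : x.length ≤ u.length) : ∃ t, t <+: y ∧ u = x ++ t := by
  refine ⟨y.take (u.length - x.length), List.take_prefix _ _, ?_⟩
  nth_rewrite 1 [List.prefix_iff_eq_take.mp h]
  rw [List.take_append, List.take_of_length_le hl]

theorem List.IsSuffix.exists_eq_append_of_length_le {α : Type*} {u x y : List α}
    (h : u <:+ x ++ y) (hl : y.length ≤ u.length) : ∃ s, s <:+ x ∧ u = s ++ y := by
  refine ⟨x.drop ((x ++ y).length - u.length), List.drop_suffix _ _, ?_⟩
  nth_rewrite 1 [List.suffix_iff_eq_drop.mp h]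
  have hn : (x ++ y).length - u.length - x.length = 0 := by
    simp only [List.length_append]; omega
  rw [List.drop_append, hn, List.drop_zero]

theorem Language.append_mem_of_reverse_leftQuotient_eq {α : Type*} {L : Language α}
    {x y s : List α} (h : L.reverse.leftQuotient x.reverse = L.reverse.leftQuotient y.reverse)
    (hs : s ++ x ∈ L) : s ++ y ∈ L := by
  have hx : s.reverse ∈ L.reverse.leftQuotient x.reverse := by
    simpa [Language.mem_leftQuotient, Language.mem_reverse] using hs
  rw [h] at hx
  simpa [Language.mem_leftQuotient, Language.mem_reverse] using hx

theorem growthInd_le_one_of_ncard_le {α : Type} {L : Language α} (C : ℕ)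
    (h : ∀ m, {w | w ∈ L ∧ w.length = m}.ncard ≤ C) : growthInd L ≤ 1 :=
  csInf_le ⟨0, fun _ hl => hl.1⟩ ⟨zero_le_one, C + 1, by positivity, fun m => by
    rw [one_pow, mul_one]
    exact_mod_cast (h m).trans C.le_succ⟩

section Hairpin

variable {σ : Type} {bar : σ → σ} {κ : ℕ} {L1 L2 : Language σ}

theorem ovr_append (u v : List σ) : ovr bar (u ++ v) = ovr bar v ++ ovr bar u := by
  simp [ovr]

@[simp]
theorem length_ovr (u : List σ) : (ovr bar u).length = u.length := by
  simp [ovr]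

theorem ovr_injective (hbar : Function.Involutive bar) : Function.Injective (ovr bar) :=
  List.reverse_injective.comp (List.map_injective_iff.mpr hbar.injective)

theorem eq_take_of_append_ovr_eq (hbar : Function.Involutive bar) {x b y D B : List σ}
    (h : x ++ b ++ ovr bar y = D ++ B ++ ovr bar D) (hlen : x.length = y.length)
    (hD : x.length ≤ D.length) : x = D.take x.length ∧ y = D.take x.length := by
  have hsplit : D ++ B ++ ovr bar D = D.take x.length
      ++ (D.drop x.length ++ B ++ ovr bar (D.drop x.length)) ++ ovr bar (D.take x.length) := by
    conv_lhs => rw [← List.take_append_drop x.length D]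
    rw [ovr_append]
    simp only [List.append_assoc]
  rw [hsplit] at h
  refine ⟨List.append_inj_left (by simpa only [List.append_assoc] using h) (by simp [hD]), ?_⟩
  exact ovr_injective hbar (List.append_inj_right' h (by simp [← hlen, hD]))

/-- Under `hpre` and `hsuf`, every factorization `δ α₀ β₀ ovr α₀ ovr δ` witnessing `hmem` has
`|x| ≤ |δ α₀|`, so `x` and `y` are both the prefix of `δ α₀` of that length. -/
theorem eq_of_append_ovr_mem_hairpinCompletion (hbar : Function.Involutive bar)
    {x b y : List σ} (hlen : x.length = y.length)
    (hmem : x ++ b ++ ovr bar y ∈ hairpinCompletion bar κ L1 L2)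
    (hpre : ∀ t, t <+: ovr bar y → x ++ b ++ t ∈ L1 → t.length ≤ κ)
    (hsuf : ∀ s, s <:+ x → s ++ b ++ ovr bar y ∈ L2 → s.length ≤ κ) : x = y := by
  obtain ⟨δ, α₀, β₀, hχ, hα₀, hside⟩ := hmem
  have hχlen := congrArg List.length hχ
  simp only [List.length_append, length_ovr] at hχlen
  have hcover : x.length ≤ (δ ++ α₀).length := by
    rw [List.length_append]
    by_contra! hlt
    rcases hside with h1 | h2
    · obtain ⟨t, ht, hu⟩ := List.IsPrefix.exists_eq_append_of_length_le
        (u := δ ++ α₀ ++ β₀ ++ ovr bar α₀) (x := x ++ b) (y := ovr bar y)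
        ⟨ovr bar δ, hχ.symm⟩ (by simp only [List.length_append, length_ovr]; omega)
      have htκ := hpre t ht (hu ▸ h1)
      have hulen := congrArg List.length hu
      simp only [List.length_append, length_ovr] at hulen
      omega
    · obtain ⟨s, hs, hu⟩ := List.IsSuffix.exists_eq_append_of_length_le
        (u := α₀ ++ β₀ ++ ovr bar α₀ ++ ovr bar δ) (x := x) (y := b ++ ovr bar y)
        ⟨δ, by simp only [List.append_assoc] at hχ ⊢; exact hχ.symm⟩
        (by simp only [List.length_append, length_ovr]; omega)
      have hsκ := hsuf s hs (by rw [List.append_assoc, ← hu]; exact h2)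
      have hulen := congrArg List.length hu
      simp only [List.length_append, length_ovr] at hulen
      omega
  obtain ⟨hx, hy⟩ := eq_take_of_append_ovr_eq hbar (B := β₀)
    (by rw [hχ, ovr_append]; simp only [List.append_assoc]) hlen hcover
  exact hx.trans hy.symm

namespace CanonFact

variable {π γ α β : List σ}

theorem eq_append_ovr (hc : CanonFact bar κ L1 L2 π γ α β) :
    π = (γ ++ α) ++ β ++ ovr bar (γ ++ α) := by
  rw [hc.1, ovr_append]
  simp only [List.append_assoc]

theorem mem_hairpinCompletion (hc : CanonFact bar κ L1 L2 π γ α β) :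
    π ∈ hairpinCompletion bar κ L1 L2 :=
  ⟨γ, α, β, hc.1, hc.2.1.ge, hc.2.2.1⟩

theorem length_le_of_prefix_mem (hc : CanonFact bar κ L1 L2 π γ α β) {t : List σ}
    (ht : t <+: ovr bar (γ ++ α)) (hmem : (γ ++ α) ++ β ++ t ∈ L1) : t.length ≤ κ := by
  have hpre : (γ ++ α) ++ β ++ t <+: π := by
    rw [hc.eq_append_ovr]
    exact (List.prefix_append_right_inj _).mpr ht
  have hle := (hc.2.2.2.1 _ hpre hmem).length_le
  simp only [List.length_append, length_ovr, hc.2.1] at hle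
  omega

theorem length_le_of_suffix_mem (hc : CanonFact bar κ L1 L2 π γ α β) {s : List σ}
    (hs : s <:+ γ ++ α) (hmem : s ++ β ++ ovr bar (γ ++ α) ∈ L2) : s.length ≤ κ := by
  have hsuf : s ++ β ++ ovr bar (γ ++ α) <:+ π := by
    obtain ⟨w, hw⟩ := hs
    exact ⟨w, by rw [hc.eq_append_ovr, ← hw]; simp only [List.append_assoc]⟩
  have hle := (hc.2.2.2.2 _ hsuf hmem).length_le
  simp only [List.length_append, length_ovr, hc.2.1] at hle
  omega

theorem eq_of_leftQuotient_eq (hbar : Function.Involutive bar) {π' γ' α' β' p p' : List σ}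
    (hc : CanonFact bar κ L1 L2 π γ α β) (hp : γ ++ α = p)
    (hc' : CanonFact bar κ L1 L2 π' γ' α' β') (hp' : γ' ++ α' = p')
    (hlen : p.length = p'.length)
    (hH : (hairpinCompletion bar κ L1 L2).leftQuotient p =
      (hairpinCompletion bar κ L1 L2).leftQuotient p')
    (h1 : L1.leftQuotient p = L1.leftQuotient p')
    (h2 : L2.reverse.leftQuotient (β ++ ovr bar p).reverse =
      L2.reverse.leftQuotient (β' ++ ovr bar p').reverse) :
    p = p' := by
  subst hp hp'
  refine (eq_of_append_ovr_mem_hairpinCompletion (κ := κ) (L1 := L1) (L2 := L2) hbar hlen.symm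
    (b := β) ?_ ?_ ?_).symm
  · have hπ : β ++ ovr bar (γ ++ α) ∈ (hairpinCompletion bar κ L1 L2).leftQuotient (γ ++ α) := by
      rw [Language.mem_leftQuotient, ← List.append_assoc, ← hc.eq_append_ovr]
      exact hc.mem_hairpinCompletion
    rw [hH, Language.mem_leftQuotient] at hπ
    rwa [List.append_assoc]
  · intro t ht hmem
    refine hc.length_le_of_prefix_mem ht ?_
    have ht' : β ++ t ∈ L1.leftQuotient (γ' ++ α') := by
      rwa [Language.mem_leftQuotient, ← List.append_assoc]
    rw [← h1, Language.mem_leftQuotient] at ht'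
    rwa [List.append_assoc]
  · intro s hs hmem
    refine hc'.length_le_of_suffix_mem hs ?_
    rw [List.append_assoc] at hmem ⊢
    exact Language.append_mem_of_reverse_leftQuotient_eq h2 hmem

end CanonFact

theorem exists_ncard_MGP_length_le (hbar : Function.Involutive bar) (h1 : L1.IsRegular)
    (h2 : L2.IsRegular) (hreg : (hairpinCompletion bar κ L1 L2).IsRegular) :
    ∃ C : ℕ, ∀ m, {w | w ∈ MGP bar κ L1 L2 ∧ w.length = m}.ncard ≤ C := by
  choose! π γ α β _ hc hp using fun w (hw : w ∈ MGP bar κ L1 L2) => hw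
  -- `L2.reverse.leftQuotient v.reverse` encodes the right quotient `{s | s ++ v ∈ L2}`.
  let profile (w : List σ) : Language σ × Language σ × Language σ :=
    ((hairpinCompletion bar κ L1 L2).leftQuotient w, L1.leftQuotient w,
      L2.reverse.leftQuotient (β w ++ ovr bar w).reverse)
  refine ⟨(Set.range (hairpinCompletion bar κ L1 L2).leftQuotient ×ˢ
    Set.range L1.leftQuotient ×ˢ Set.range L2.reverse.leftQuotient).ncard,
    fun m => Set.ncard_le_ncard_of_injOn profile ?_ ?_ ?_⟩
  · intro w _
    exact ⟨⟨w, rfl⟩, ⟨w, rfl⟩, ⟨_, rfl⟩⟩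
  · rintro w ⟨hw, rfl⟩ w' ⟨hw', hlen⟩ heq
    simp only [profile, Prod.mk.injEq] at heq
    exact (hc w hw).eq_of_leftQuotient_eq hbar (hp w hw).symm (hc w' hw') (hp w' hw').symm
      hlen.symm heq.1 heq.2.1 heq.2.2
  · exact hreg.finite_range_leftQuotient.prod
      (h1.finite_range_leftQuotient.prod h2.reverse.finite_range_leftQuotient)

end Hairpin

theorem mgp_growth_of_regular_hairpin_completion_general
    {σ : Type}
    (bar : σ → σ) (hbar : ∀ a, bar (bar a) = a)
    (κ : ℕ)
    (L1 L2 : Language σ) (h1 : L1.IsRegular) (h2 : L2.IsRegular)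
    (hreg : (hairpinCompletion bar κ L1 L2).IsRegular) :
    growthInd (MGP bar κ L1 L2) ≤ 1 := by
  obtain ⟨C, hC⟩ := exists_ncard_MGP_length_le hbar h1 h2 hreg
  exact growthInd_le_one_of_ncard_le C hC

theorem mgp_growth_of_regular_hairpin_completion
    {σ : Type} [Fintype σ] (hσ : 2 ≤ Fintype.card σ)
    (bar : σ → σ) (hbar : ∀ a, bar (bar a) = a)
    (κ : ℕ) (hκ : 1 ≤ κ)
    (L1 L2 : Language σ) (h1 : L1.IsRegular) (h2 : L2.IsRegular)
    (hreg : (hairpinCompletion bar κ L1 L2).IsRegular) :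
    growthInd (MGP bar κ L1 L2) ≤ 1 :=
  mgp_growth_of_regular_hairpin_completion_general bar hbar κ L1 L2 h1 h2 hreg
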